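/- arXiv:1108.3221 — 2 statements merged into one kernel-verified Lean document; each statement's English description precedes it below -/
import Mathlib

section
/- Let r > 0, K2 > 0, K1 ∈ ℝ, H > 0, s0 ∈ ℝ, let I⁺ and I⁻ be disjoint finite index sets, and for each i ∈ I⁺ ∪ I⁻ let α_i, R_i0 ∈ ℝ. For u ∈ [−1,1] let ξ_u(τ) = s0 + uτ, and assume that for every u ∈ [−1,1] and every τ ∈ [0,H] one has 0 ≤ α_i − ξ_u(τ) ≤ r for all i ∈ I⁺ and −r ≤ α_i − ξ_u(τ) ≤ 0 for all i ∈ I⁻. For each u ∈ [−1,1] and i ∈ I⁺ ∪ I⁻, let R_i^u : [0,H] → ℝ be differentiable with R_i^u(0) = R_i0 and (R_i^u)'(τ) = K1 − K2·(1 − |α_i − ξ_u(τ)|/r) for all τ ∈ [0,H], and define J(u) = Σ_{i∈I⁺∪I⁻} ∫_0^H R_i^u(τ) dτ. Then J(u) = J(0) + u·(K2·H³/(6r))·(|I⁻| − |I⁺|) for all u ∈ [−1,1]. Consequently, if |I⁺| > |I⁻| then u = 1 is the unique minimizer of J over [−1,1], and if |I⁺| < |I⁻| then u = −1 is the unique minimizer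 of J over [−1,1]. -/
/-!
Each point of `I⁺` stays to the right of the agent and each point of `I⁻` to its left, so the
absolute value in the detection function opens with a fixed sign and every `Ṙᵢ` is affine in `τ`
with slope `∓ K2 u / r`. Integrating twice, each `∫₀ᴴ Rᵢ` is affine in `u` with slope
`∓ K2 H³ / (6 r)`. Summing over `I⁺` and `I⁻` makes `J` affine in `u`, and an affine function
on `[-1, 1]` with nonzero slope has its unique minimum at an endpoint.
-/

open Set

lemma hasDerivAt_quadratic (x₀ a b τ : ℝ) :
    HasDerivAt (fun τ => x₀ + a * τ + b * τ ^ 2 / 2) (a + b * τ) τ :=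
  (((hasDerivAt_id τ).const_mul a).const_add x₀ |>.add
    (((hasDerivAt_pow 2 τ).const_mul b).div_const 2)).congr_deriv (by push_cast; ring)

lemma integral_quadratic (x₀ a b H : ℝ) :
    ∫ τ in (0 : ℝ)..H, (x₀ + a * τ + b * τ ^ 2 / 2) = x₀ * H + a * H ^ 2 / 2 + b * H ^ 3 / 6 := by
  have hF (τ : ℝ) : HasDerivAt (fun τ => x₀ * τ + a * τ ^ 2 / 2 + b * τ ^ 3 / 6)
      (x₀ + a * τ + b * τ ^ 2 / 2) τ :=
    (((hasDerivAt_id τ).const_mul x₀).add (((hasDerivAt_pow 2 τ).const_mul a).div_const 2)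
      |>.add (((hasDerivAt_pow 3 τ).const_mul b).div_const 6)).congr_deriv (by push_cast; ring)
  rw [intervalIntegral.integral_eq_sub_of_hasDerivAt (fun τ _ => hF τ)
    (Continuous.intervalIntegrable (by fun_prop) 0 H)]
  ring

lemma eqOn_Icc_of_hasDerivWithinAt_affine {f : ℝ → ℝ} {a b H : ℝ}
    (hf : ∀ τ ∈ Icc 0 H, HasDerivWithinAt f (a + b * τ) (Icc 0 H) τ) :
    EqOn f (fun τ => f 0 + a * τ + b * τ ^ 2 / 2) (Icc 0 H) := by
  refine eq_of_has_deriv_right_eq (fun τ hτ => ?_)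
    (fun τ _ => (hasDerivAt_quadratic (f 0) a b τ).hasDerivWithinAt)
    (fun τ hτ => (hf τ hτ).continuousWithinAt) (by fun_prop) (by simp)
  exact (hf τ (mem_Icc_of_Ico hτ)).mono_of_mem_nhdsWithin (Icc_mem_nhdsGE_of_mem hτ)

lemma integral_eq_of_hasDerivWithinAt_affine {f : ℝ → ℝ} {a b H : ℝ} (hH : 0 ≤ H)
    (hf : ∀ τ ∈ Icc 0 H, HasDerivWithinAt f (a + b * τ) (Icc 0 H) τ) :
    ∫ τ in (0 : ℝ)..H, f τ = f 0 * H + a * H ^ 2 / 2 + b * H ^ 3 / 6 := by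
  rw [← integral_quadratic]
  refine intervalIntegral.integral_congr fun τ hτ => ?_
  rw [uIcc_of_le hH] at hτ
  exact eqOn_Icc_of_hasDerivWithinAt_affine hf hτ

lemma integral_eq_of_hasDerivWithinAt_detection {f : ℝ → ℝ} {r K1 K2 H s0 u α σ : ℝ}
    (hH : 0 ≤ H) (habs : ∀ τ ∈ Icc 0 H, |α - (s0 + u * τ)| = σ * (α - (s0 + u * τ)))
    (hf : ∀ τ ∈ Icc 0 H,
      HasDerivWithinAt f (K1 - K2 * (1 - |α - (s0 + u * τ)| / r)) (Icc 0 H) τ) :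
    ∫ τ in (0 : ℝ)..H, f τ =
      f 0 * H + (K1 - K2 + σ * K2 * (α - s0) / r) * H ^ 2 / 2 - σ * u * (K2 * H ^ 3 / (6 * r)) := by
  have hf' : ∀ τ ∈ Icc 0 H, HasDerivWithinAt f
      ((K1 - K2 + σ * K2 * (α - s0) / r) + (-(σ * K2 * u / r)) * τ) (Icc 0 H) τ := fun τ hτ =>
    (hf τ hτ).congr_deriv (by rw [habs τ hτ]; ring)
  rw [integral_eq_of_hasDerivWithinAt_affine hH hf']
  ring

lemma integral_sub_integral_of_hasDerivWithinAt_detection {f g : ℝ → ℝ}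
    {r K1 K2 H s0 u v α σ : ℝ} (hH : 0 ≤ H) (hfg : f 0 = g 0)
    (habs_u : ∀ τ ∈ Icc 0 H, |α - (s0 + u * τ)| = σ * (α - (s0 + u * τ)))
    (habs_v : ∀ τ ∈ Icc 0 H, |α - (s0 + v * τ)| = σ * (α - (s0 + v * τ)))
    (hf : ∀ τ ∈ Icc 0 H,
      HasDerivWithinAt f (K1 - K2 * (1 - |α - (s0 + u * τ)| / r)) (Icc 0 H) τ)
    (hg : ∀ τ ∈ Icc 0 H,
      HasDerivWithinAt g (K1 - K2 * (1 - |α - (s0 + v * τ)| / r)) (Icc 0 H) τ) :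
    (∫ τ in (0 : ℝ)..H, f τ) - ∫ τ in (0 : ℝ)..H, g τ = -σ * (u - v) * (K2 * H ^ 3 / (6 * r)) := by
  rw [integral_eq_of_hasDerivWithinAt_detection hH habs_u hf,
    integral_eq_of_hasDerivWithinAt_detection hH habs_v hg, hfg]
  ring

lemma sum_union_eq_sum_add_mul_card_sub {ι : Type*} [DecidableEq ι] {s t : Finset ι}
    (hst : Disjoint s t) {F G : ι → ℝ} {d : ℝ}
    (hs : ∀ i ∈ s, F i = G i - d) (ht : ∀ i ∈ t, F i = G i + d) :
    ∑ i ∈ s ∪ t, F i = ∑ i ∈ s ∪ t, G i + d * ((t.card : ℝ) - s.card) := by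
  rw [Finset.sum_union hst, Finset.sum_union hst, Finset.sum_congr rfl hs, Finset.sum_congr rfl ht]
  simp only [Finset.sum_sub_distrib, Finset.sum_add_distrib, Finset.sum_const, nsmul_eq_mul]
  ring

lemma apply_one_lt_of_eq_add_mul {J : ℝ → ℝ} {k : ℝ}
    (hJ : ∀ u ∈ Icc (-1 : ℝ) 1, J u = J 0 + u * k) (hk : k < 0)
    {u : ℝ} (hu : u ∈ Icc (-1 : ℝ) 1) (hne : u ≠ 1) : J 1 < J u := by
  have hu1 : u < 1 := lt_of_le_of_ne hu.2 hne
  rw [hJ 1 (right_mem_Icc.mpr (by norm_num)), hJ u hu]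
  nlinarith

lemma apply_neg_one_lt_of_eq_add_mul {J : ℝ → ℝ} {k : ℝ}
    (hJ : ∀ u ∈ Icc (-1 : ℝ) 1, J u = J 0 + u * k) (hk : 0 < k)
    {u : ℝ} (hu : u ∈ Icc (-1 : ℝ) 1) (hne : u ≠ -1) : J (-1) < J u := by
  have hu1 : -1 < u := lt_of_le_of_ne hu.1 hne.symm
  rw [hJ (-1) (left_mem_Icc.mpr (by norm_num)), hJ u hu]
  nlinarith

open Finset in
/-- Receding horizon lemma: an agent at `s0` moves with constant control `u ∈ [−1,1]`
over the horizon `[0,H]`; `I⁺` (resp. `I⁻`) indexes sampling points staying within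
sensing range `r` to the right (resp. left) of the agent for all admissible `u`;
each uncertainty evolves as `Ṙᵢᵘ(τ) = K1 − K2(1 − |αᵢ − ξᵤ(τ)|/r)` with
`Rᵢᵘ(0) = Rᵢ0`. Then the total cost satisfies
`J(u) = J(0) + u·(K2H³/(6r))·(|I⁻| − |I⁺|)`, so `u = 1` is the unique minimizer
when `|I⁺| > |I⁻|` and `u = −1` is the unique minimizer when `|I⁺| < |I⁻|`. -/
theorem stmt_8 (r K1 K2 H s0 : ℝ) (hr : r > 0) (hK2 : K2 > 0) (hH : H > 0)
    {ι : Type*} [DecidableEq ι] (Iplus Iminus : Finset ι) (hdisj : Disjoint Iplus Iminus)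
    (α R0 : ι → ℝ)
    (hrange : ∀ u ∈ Set.Icc (-1 : ℝ) 1, ∀ τ ∈ Set.Icc (0 : ℝ) H,
      (∀ i ∈ Iplus, 0 ≤ α i - (s0 + u * τ) ∧ α i - (s0 + u * τ) ≤ r) ∧
      (∀ i ∈ Iminus, -r ≤ α i - (s0 + u * τ) ∧ α i - (s0 + u * τ) ≤ 0))
    (R : ℝ → ι → ℝ → ℝ)
    (hR0 : ∀ u ∈ Set.Icc (-1 : ℝ) 1, ∀ i ∈ Iplus ∪ Iminus, R u i 0 = R0 i)
    (hRderiv : ∀ u ∈ Set.Icc (-1 : ℝ) 1, ∀ i ∈ Iplus ∪ Iminus, ∀ τ ∈ Set.Icc (0 : ℝ) H,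
      HasDerivWithinAt (R u i)
        (K1 - K2 * (1 - |α i - (s0 + u * τ)| / r)) (Set.Icc (0 : ℝ) H) τ)
    (J : ℝ → ℝ)
    (hJ : ∀ u : ℝ, J u = ∑ i ∈ Iplus ∪ Iminus, ∫ τ in (0 : ℝ)..H, R u i τ) :
    (∀ u ∈ Set.Icc (-1 : ℝ) 1,
      J u = J 0 + u * (K2 * H ^ 3 / (6 * r)) * ((Iminus.card : ℝ) - (Iplus.card : ℝ))) ∧
    (Iminus.card < Iplus.card →
      ∀ u ∈ Set.Icc (-1 : ℝ) 1, u ≠ 1 → J 1 < J u) ∧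
    (Iplus.card < Iminus.card →
      ∀ u ∈ Set.Icc (-1 : ℝ) 1, u ≠ -1 → J (-1) < J u) := by
  set c := K2 * H ^ 3 / (6 * r)
  have h0 : (0 : ℝ) ∈ Icc (-1 : ℝ) 1 := by norm_num
  have hshift (σ : ℝ) {u : ℝ} (hu : u ∈ Icc (-1 : ℝ) 1) {i : ι} (hi : i ∈ Iplus ∪ Iminus)
      (habs : ∀ v ∈ Icc (-1 : ℝ) 1, ∀ τ ∈ Icc 0 H,
        |α i - (s0 + v * τ)| = σ * (α i - (s0 + v * τ))) :
      ∫ τ in (0 : ℝ)..H, R u i τ = (∫ τ in (0 : ℝ)..H, R 0 i τ) - σ * u * c := by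
    linarith [integral_sub_integral_of_hasDerivWithinAt_detection hH.le
      ((hR0 u hu i hi).trans (hR0 0 h0 i hi).symm) (habs u hu) (habs 0 h0)
      (hRderiv u hu i hi) (hRderiv 0 h0 i hi)]
  have hJ_affine : ∀ u ∈ Icc (-1 : ℝ) 1,
      J u = J 0 + u * c * ((Iminus.card : ℝ) - (Iplus.card : ℝ)) := by
    intro u hu
    rw [hJ u, hJ 0]
    refine sum_union_eq_sum_add_mul_card_sub hdisj (fun i hi => ?_) (fun i hi => ?_)
    · simpa using hshift 1 hu (mem_union_left _ hi) fun v hv τ hτ => by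
        rw [one_mul, abs_of_nonneg ((hrange v hv τ hτ).1 i hi).1]
    · simpa using hshift (-1) hu (mem_union_right _ hi) fun v hv τ hτ => by
        rw [neg_one_mul, abs_of_nonpos ((hrange v hv τ hτ).2 i hi).2]
  have hJ_slope : ∀ u ∈ Icc (-1 : ℝ) 1,
      J u = J 0 + u * (c * ((Iminus.card : ℝ) - (Iplus.card : ℝ))) := fun u hu => by
    rw [hJ_affine u hu, mul_assoc]
  have hc : 0 < c := by positivity
  refine ⟨hJ_affine, fun hlt u hu hne => ?_, fun hlt u hu hne => ?_⟩
  · exact apply_one_lt_of_eq_add_mul hJ_slope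
      (mul_neg_of_pos_of_neg hc (sub_neg.mpr (by exact_mod_cast hlt))) hu hne
  · exact apply_neg_one_lt_of_eq_add_mul hJ_slope
      (mul_pos hc (sub_pos.mpr (by exact_mod_cast hlt))) hu hne
end

section
/- Let T > 0, let g : [0,T] → ℝ be continuous, and let R : [0,T] → ℝ be continuous with R(0) ≥ 0. Suppose that for every t ∈ [0,T) the right derivative of R at t exists and equals 0 if R(t) ≤ 0 and g(t) < 0, and equals g(t) otherwise. Then R(t) ≥ 0 for all t ∈ [0,T]. -/
open Topology Filter

/-- Invariance of nonnegativity for the uncertainty dynamics: if `R` is continuous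
on `[0,T]` with `R(0) ≥ 0` and, at every `t ∈ [0,T)`, the right derivative of `R`
equals `0` when `R(t) ≤ 0` and `g(t) < 0`, and equals `g(t)` otherwise, then
`R(t) ≥ 0` on all of `[0,T]`. -/
theorem stmt_9 (T : ℝ) (hT : T > 0) (g R : ℝ → ℝ)
    (hg : ContinuousOn g (Set.Icc 0 T)) (hR : ContinuousOn R (Set.Icc 0 T))
    (hR0 : R 0 ≥ 0)
    (hderiv : ∀ t ∈ Set.Ico (0 : ℝ) T,
      HasDerivWithinAt R (if R t ≤ 0 ∧ g t < 0 then 0 else g t) (Set.Ici t) t) :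
    ∀ t ∈ Set.Icc (0 : ℝ) T, R t ≥ 0 := by
  by_contra hcon
  push_neg at hcon
  obtain ⟨t₁, ht₁, hRt₁⟩ := hcon
  -- the set of times in [0, t₁] where R ≥ 0
  set S : Set ℝ := Set.Icc 0 t₁ ∩ R ⁻¹' Set.Ici 0 with hS
  have hsub : Set.Icc (0:ℝ) t₁ ⊆ Set.Icc 0 T := Set.Icc_subset_Icc le_rfl ht₁.2
  have hSne : S.Nonempty := ⟨0, ⟨le_rfl, ht₁.1⟩, hR0⟩
  have hSclosed : IsClosed S :=
    (hR.mono hsub).preimage_isClosed_of_isClosed isClosed_Icc isClosed_Ici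
  have hScomp : IsCompact S := by
    have : S = Set.Icc 0 t₁ ∩ S := by
      ext x; simp only [hS, Set.mem_inter_iff]; tauto
    rw [this]; exact isCompact_Icc.inter_right hSclosed
  obtain ⟨s, hsEq⟩ : ∃ s, s = sSup S := ⟨_, rfl⟩
  have hsS : s ∈ S := hsEq ▸ hScomp.sSup_mem hSne
  have hs0 : (0:ℝ) ≤ s := hsS.1.1
  have hst₁ : s ≤ t₁ := hsS.1.2
  have hRs : R s ≥ 0 := hsS.2
  have hslt : s < t₁ := lt_of_le_of_ne hst₁ (by rintro rfl; exact absurd hRs (not_le.2 hRt₁))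
  -- on (s, t₁], R < 0
  have hneg : ∀ t, s < t → t ≤ t₁ → R t < 0 := by
    intro t hts htt₁
    by_contra h
    push_neg at h
    have ht : t ∈ S := ⟨⟨hs0.trans hts.le, htt₁⟩, h⟩
    have := le_csSup hScomp.bddAbove ht
    rw [← hsEq] at this
    exact absurd this (not_le.2 hts)
  -- R s = 0 by right continuity
  have hRs0 : R s = 0 := by
    have hcw : ContinuousWithinAt R (Set.Ioc s t₁) s := by
      have := (hR.mono hsub) s ⟨hs0, hst₁⟩
      exact this.mono (fun x hx => ⟨hs0.trans hx.1.le, hx.2⟩)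
    have hne : (𝓝[Set.Ioc s t₁] s).NeBot := by
      rw [← mem_closure_iff_nhdsWithin_neBot, closure_Ioc hslt.ne]
      exact ⟨le_rfl, hslt.le⟩
    have hle : R s ≤ 0 := by
      refine le_of_tendsto hcw ?_
      filter_upwards [self_mem_nhdsWithin] with x hx
      exact (hneg x hx.1 hx.2).le
    linarith
  -- R ≤ 0 on [s, t₁]
  have hRle : ∀ t ∈ Set.Icc s t₁, R t ≤ 0 := by
    intro t ⟨h1, h2⟩
    rcases eq_or_lt_of_le h1 with rfl | h
    · exact hRs0.le
    · exact (hneg t h h2).le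
  -- apply the fencing lemma to -R on [s, t₁], with bound B = 0
  have key : ∀ ⦃x⦄, x ∈ Set.Icc s t₁ → -R x ≤ 0 := by
    refine image_le_of_deriv_right_le_deriv_boundary
      (f := fun t => -R t) (f' := fun t => -(if R t ≤ 0 ∧ g t < 0 then 0 else g t))
      (B := fun _ => (0:ℝ)) (B' := fun _ => (0:ℝ))
      ((hR.mono hsub).mono (Set.Icc_subset_Icc_left hs0)).neg
      (fun x hx => ?_) (by simp [hRs0]) continuousOn_const
      (fun x _ => hasDerivWithinAt_const _ _ _) (fun x hx => ?_)
    · exact (hderiv x ⟨hs0.trans hx.1, hx.2.trans_le ht₁.2⟩).neg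
    · have hRx : R x ≤ 0 := hRle x ⟨hx.1, hx.2.le⟩
      by_cases hgx : g x < 0
      · simp [hRx, hgx]
      · simp only [hgx, and_false, if_false]
        linarith [not_lt.1 hgx]
  linarith [key (Set.right_mem_Icc.2 hslt.le)]
end
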